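/- Let I be an index set and n : I → ℕ a family of positive integers; write 𝒜 = ⊕_{ι∈I} M_{n_ι}(ℂ) for the direct sum, sitting as a two-sided ideal inside the product Π_{ι∈I} M_{n_ι}(ℂ). Let f₁, …, f_k be linear functionals on 𝒜 and a₁, …, a_k, b₁, …, b_k ∈ 𝒜. If Σ_{i=1}^{k} f_i(a_i c b_i) = 0 for all c ∈ 𝒜, then Σ_{i=1}^{k} f_i(a_i m b_i) = 0 for all m ∈ Π_{ι∈I} M_{n_ι}(ℂ) (note that a_i m b_i ∈ 𝒜 since a_i has finite support). Consequently, every reduced functional on 𝒜 extends in a well-defined way to the product algebra by the formula (a f b)(m) = f(b m a). -/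

import Mathlib

/-- The product algebra `Π ι, M_{n ι}(ℂ)`. -/
abbrev FullProd (I : Type*) (n : I → ℕ) : Type _ :=
  ∀ ι : I, Matrix (Fin (n ι)) (Fin (n ι)) ℂ

/-- The algebraic direct sum `⊕ ι, M_{n ι}(ℂ)`, realized as the set of finitely supported
elements of the product; it is a non-unital subalgebra (in fact a two-sided ideal) of the
product, and the product realizes its multiplier algebra. -/
noncomputable def FinSupp (I : Type*) (n : I → ℕ) : NonUnitalSubalgebra ℂ (FullProd I n) where
  carrier := {x | {ι | x ι ≠ 0}.Finite}
  add_mem' := by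
    intro a b ha hb
    refine (ha.union hb).subset fun ι h => ?_
    simp only [Set.mem_setOf_eq, Set.mem_union, Pi.add_apply] at h ⊢
    by_contra hc
    push_neg at hc
    exact h (by rw [hc.1, hc.2, add_zero])
  zero_mem' := by
    simp only [Set.mem_setOf_eq, Pi.zero_apply, ne_eq, not_true_eq_false]
    simp
  mul_mem' := by
    intro a b ha hb
    refine ha.subset fun ι h => ?_
    simp only [Set.mem_setOf_eq, Pi.mul_apply] at h ⊢
    intro h0; exact h (by rw [h0, zero_mul])
  smul_mem' := by
    intro c x hx
    refine hx.subset fun ι h => ?_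
    simp only [Set.mem_setOf_eq, Pi.smul_apply] at h ⊢
    intro h0; exact h (by rw [h0, smul_zero])

/-- For `a, b` in the direct sum and `x` in the product, `a * x * b` lies in the direct sum:
this realizes the evaluation of reduced functionals on multipliers. -/
noncomputable def sandwich {I : Type*} {n : I → ℕ} (a : FinSupp I n) (x : FullProd I n)
    (b : FinSupp I n) : FinSupp I n :=
  ⟨(a : FullProd I n) * x * (b : FullProd I n), by
    have ha : {ι | (a : FullProd I n) ι ≠ 0}.Finite := a.2
    refine ha.subset fun ι h => ?_
    simp only [Set.mem_setOf_eq, Pi.mul_apply] at h ⊢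
    intro h0; exact h (by rw [h0, zero_mul, zero_mul])⟩

/-- The central idempotent `e_F` supported on a finite set `F`, an element of the direct sum. -/
noncomputable def unitF {I : Type*} [DecidableEq I] (n : I → ℕ) (F : Finset I) : FinSupp I n :=
  ⟨fun ι => if ι ∈ F then 1 else 0, by
    show {ι | (if ι ∈ F then (1 : Matrix (Fin (n ι)) (Fin (n ι)) ℂ) else 0) ≠ 0}.Finite
    refine F.finite_toSet.subset fun ι h => ?_
    simp only [Set.mem_setOf_eq] at h
    by_contra hF
    exact h (if_neg hF)⟩

/-
Since `a * m * b` only depends on `m` on the support of `a`, and the supports of finitely many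
`aᵢ` lie in one finite set `F`, we may replace `m` by `e_F * m`, which lies in the direct sum;
the hypothesis applied to `c = e_F * m` then gives the claim.
-/

namespace FinSupp

variable {I : Type*} {n : I → ℕ}

theorem mul_mem_of_left_mem {x : FullProd I n} (hx : x ∈ FinSupp I n) (m : FullProd I n) :
    x * m ∈ FinSupp I n :=
  hx.subset fun ι hι h0 => hι (by rw [Pi.mul_apply, h0, zero_mul])

theorem exists_finset_support_subset {k : ℕ} (a : Fin k → FinSupp I n) :
    ∃ F : Finset I, ∀ i ι, (a i : FullProd I n) ι ≠ 0 → ι ∈ F :=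
  ⟨(Set.finite_iUnion fun i => (a i).2).toFinset, fun i ι hι => by
    simpa only [Set.Finite.mem_toFinset, Set.mem_iUnion] using ⟨i, hι⟩⟩

end FinSupp

section unitF

variable {I : Type*} [DecidableEq I] {n : I → ℕ}

theorem coe_unitF_apply (F : Finset I) (ι : I) :
    (unitF n F : FullProd I n) ι = if ι ∈ F then 1 else 0 := rfl

theorem mul_unitF_of_support_subset {F : Finset I} {x : FullProd I n}
    (hx : ∀ ι, x ι ≠ 0 → ι ∈ F) : x * unitF n F = x := by
  funext ι
  rw [Pi.mul_apply, coe_unitF_apply]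
  by_cases hι : ι ∈ F
  · rw [if_pos hι, mul_one]
  · rw [if_neg hι, mul_zero, not_not.mp (mt (hx ι) hι)]

theorem sandwich_unitF_mul {F : Finset I} (a b : FinSupp I n)
    (ha : ∀ ι, (a : FullProd I n) ι ≠ 0 → ι ∈ F) (m : FullProd I n) :
    sandwich a (unitF n F * m) b = sandwich a m b :=
  Subtype.ext <| by
    change (a : FullProd I n) * (unitF n F * m) * b = a * m * b
    rw [← mul_assoc, mul_unitF_of_support_subset ha]

end unitF

theorem bohr_stmt2_general {I : Type*} (n : I → ℕ) (k : ℕ)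
    (f : Fin k → (FinSupp I n →ₗ[ℂ] ℂ)) (a b : Fin k → FinSupp I n)
    (h : ∀ c : FinSupp I n, ∑ i, f i (sandwich (a i) (c : FullProd I n) (b i)) = 0) :
    ∀ m : FullProd I n, ∑ i, f i (sandwich (a i) m (b i)) = 0 := by
  intro m
  classical
  obtain ⟨F, hF⟩ := FinSupp.exists_finset_support_subset a
  let c : FinSupp I n := ⟨unitF n F * m, FinSupp.mul_mem_of_left_mem (unitF n F).2 m⟩
  calc ∑ i, f i (sandwich (a i) m (b i))
      = ∑ i, f i (sandwich (a i) (c : FullProd I n) (b i)) := by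
        simp only [c, sandwich_unitF_mul _ _ (hF _)]
    _ = 0 := h c

/-- Let `𝒜 = ⊕ ι, M_{n ι}(ℂ)` sit as an ideal inside `Π ι, M_{n ι}(ℂ)`.
If linear functionals `f i` on `𝒜` and elements `a i, b i ∈ 𝒜` satisfy
`∑ i, f i (a i * c * b i) = 0` for all `c ∈ 𝒜`, then `∑ i, f i (a i * m * b i) = 0` for every
element `m` of the product (note `a i * m * b i ∈ 𝒜`).  Hence every reduced functional on `𝒜`
extends in a well-defined way to the product algebra. -/
theorem bohr_stmt2 {I : Type*} (n : I → ℕ) (hn : ∀ ι, 0 < n ι) (k : ℕ)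
    (f : Fin k → (FinSupp I n →ₗ[ℂ] ℂ)) (a b : Fin k → FinSupp I n)
    (h : ∀ c : FinSupp I n, ∑ i, f i (sandwich (a i) (c : FullProd I n) (b i)) = 0) :
    ∀ m : FullProd I n, ∑ i, f i (sandwich (a i) m (b i)) = 0 :=
  bohr_stmt2_general n k f a b h
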